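/- arXiv:2106.01453 — 4 statements merged into one kernel-verified Lean document; each statement's English description precedes it below -/
import Mathlib

section
/- Let a ∈ ℝ^p and s ∈ ℝ^p. Then sᵢ ∈ ∂ReLU(aᵢ) for every coordinate i ∈ {1,…,p} if and only if the coordinate-wise inequalities s·(s − 1) ≤ 0, s·a ≥ 0, and (s − 1)·a ≥ 0 hold, where products of vectors are taken coordinate-wise and 1 denotes the all-ones vector. -/
/-- The subgradient of ReLU: ∂ReLU(x) = {0} for x < 0, {1} for x > 0, and [0,1] for x = 0. -/
def subReLU (x : ℝ) : Set ℝ :=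
  if x < 0 then {0} else if 0 < x then {1} else Set.Icc 0 1

lemma subReLU_scalar (a s : ℝ) :
    s ∈ subReLU a ↔ (s * (s - 1) ≤ 0 ∧ s * a ≥ 0 ∧ (s - 1) * a ≥ 0) := by
  unfold subReLU
  rcases lt_trichotomy a 0 with h | h | h
  · simp only [if_pos h, Set.mem_singleton_iff]
    constructor
    · rintro rfl; norm_num; nlinarith
    · rintro ⟨h1, h2, h3⟩; nlinarith
  · subst h
    simp only [lt_irrefl, if_false, Set.mem_Icc]
    constructor
    · rintro ⟨h1, h2⟩; refine ⟨by nlinarith, by nlinarith, by nlinarith⟩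
    · rintro ⟨h1, h2, h3⟩; constructor <;> nlinarith
  · simp only [if_neg (not_lt.2 h.le), if_pos h, Set.mem_singleton_iff]
    constructor
    · rintro rfl; norm_num; nlinarith
    · rintro ⟨h1, h2, h3⟩; nlinarith

/-- for vectors a, s ∈ ℝ^p, sᵢ ∈ ∂ReLU(aᵢ) for every i iff the coordinate-wise
inequalities s·(s − 1) ≤ 0, s·a ≥ 0 and (s − 1)·a ≥ 0 hold, products taken coordinate-wise. -/
theorem subrelu_vector_semialgebraic (p : ℕ) (a s : Fin p → ℝ) :
    (∀ i : Fin p, s i ∈ subReLU (a i)) ↔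
      ((∀ i : Fin p, s i * (s i - 1) ≤ 0) ∧
       (∀ i : Fin p, s i * a i ≥ 0) ∧
       (∀ i : Fin p, (s i - 1) * a i ≥ 0)) := by
  constructor
  · intro h
    exact ⟨fun i => ((subReLU_scalar _ _).1 (h i)).1,
           fun i => ((subReLU_scalar _ _).1 (h i)).2.1,
           fun i => ((subReLU_scalar _ _).1 (h i)).2.2⟩
  · rintro ⟨h1, h2, h3⟩ i
    exact (subReLU_scalar _ _).2 ⟨h1 i, h2 i, h3 i⟩
end

section
/- Let W ∈ ℝ^{p×p}, U ∈ ℝ^{p×p₀}, u ∈ ℝ^p, C ∈ ℝ^{K×p}, c ∈ ℝ^K, Q ∈ ℝ^{K×K}, b ∈ ℝ^K, and let E ⊆ ℝ^{p₀}. Let g : ℝ^{p₀} → ℝ^m be a map with g(x) ≥ 0 coordinate-wise for every x ∈ E. Suppose there exist σ₁ ∈ ℝ^m with σ₁ ≥ 0, σ₂, σ₃ ∈ ℝ^p with σ₂ ≥ 0, σ₃ ≥ 0, τ ∈ ℝ^p, and a polynomial σ₀ on ℝ^{p₀} × ℝ^p that is a sum of squares, such that for all (x, z) ∈ ℝ^{p₀}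 × ℝ^p: 1 − ‖Q(Cz + c) + b‖₂² = σ₀(x, z) + σ₁ᵀ g(x) + τᵀ(z ∘ (z − Wz − Ux − u)) + σ₂ᵀ(z − Wz − Ux − u) + σ₃ᵀ z, where ∘ is the coordinate-wise product. Then for every x ∈ E and every z ∈ ℝ^p with z = ReLU(Wz + Ux + u), one has ‖Q(Cz + c) + b‖₂ ≤ 1; that is, the image of E under the monDEQ F(x) = Cz + c is contained in the ellipsoid {ξ ∈ ℝ^K : ‖Qξ + b‖₂ ≤ 1}. -/
open MvPolynomial

/-- The Euclidean (L₂) norm on ℝ^K. -/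
noncomputable def l2Norm {n : ℕ} (x : Fin n → ℝ) : ℝ :=
  ‖(WithLp.equiv 2 (Fin n → ℝ)).symm x‖

/-- A multivariate polynomial is a sum of squares if it is a finite sum of squares of
polynomials. -/
def IsSOS {σ : Type*} (f : MvPolynomial σ ℝ) : Prop :=
  ∃ (k : ℕ) (h : Fin k → MvPolynomial σ ℝ), f = ∑ i, (h i) ^ 2

/-- soundness of the Ellipsoid Model certificate: if the SOS decomposition
1 − ‖Q(Cz + c) + b‖₂² = σ₀(x,z) + σ₁ᵀg(x) + τᵀ(z∘(z − Wz − Ux − u)) + σ₂ᵀ(z − Wz − Ux − u) + σ₃ᵀz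
holds on all of ℝ^{p₀} × ℝ^p, with σ₀ an SOS polynomial, σ₁, σ₂, σ₃ ≥ 0 and g ≥ 0 on E, then
every output F(x) = Cz + c with x ∈ E and z = ReLU(Wz + Ux + u) lies in the ellipsoid
{ξ : ‖Qξ + b‖₂ ≤ 1}. -/
theorem ellipsoid_certificate_sound (p₀ p K m : ℕ)
    (W : Matrix (Fin p) (Fin p) ℝ) (U : Matrix (Fin p) (Fin p₀) ℝ) (u : Fin p → ℝ)
    (C : Matrix (Fin K) (Fin p) ℝ) (c : Fin K → ℝ)
    (Q : Matrix (Fin K) (Fin K) ℝ) (b : Fin K → ℝ)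
    (E : Set (Fin p₀ → ℝ)) (g : (Fin p₀ → ℝ) → (Fin m → ℝ))
    (hg : ∀ x ∈ E, ∀ j, 0 ≤ g x j)
    (σ₁ : Fin m → ℝ) (hσ₁ : ∀ j, 0 ≤ σ₁ j)
    (σ₂ σ₃ : Fin p → ℝ) (hσ₂ : ∀ i, 0 ≤ σ₂ i) (hσ₃ : ∀ i, 0 ≤ σ₃ i)
    (τ : Fin p → ℝ)
    (σ₀ : MvPolynomial (Fin p₀ ⊕ Fin p) ℝ) (hσ₀ : IsSOS σ₀)
    (hid : ∀ (x : Fin p₀ → ℝ) (z : Fin p → ℝ),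
      1 - (l2Norm (Q.mulVec (C.mulVec z + c) + b)) ^ 2 =
        eval (Sum.elim x z) σ₀
        + dotProduct σ₁ (g x)
        + dotProduct τ (fun i => z i * (z - W.mulVec z - U.mulVec x - u) i)
        + dotProduct σ₂ (z - W.mulVec z - U.mulVec x - u)
        + dotProduct σ₃ z) :
    ∀ x ∈ E, ∀ z : Fin p → ℝ,
      z = (fun i => max 0 ((W.mulVec z + U.mulVec x + u) i)) →
      l2Norm (Q.mulVec (C.mulVec z + c) + b) ≤ 1 := by
  intro x hx z hz
  set a := W.mulVec z + U.mulVec x + u with ha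
  have hsub : ∀ i, (z - W.mulVec z - U.mulVec x - u) i = z i - a i := by
    intro i; simp [ha, Pi.sub_apply, Pi.add_apply]; ring
  have hznn : ∀ i, 0 ≤ z i := by
    intro i; rw [hz]; exact le_max_left _ _
  have hge : ∀ i, 0 ≤ z i - a i := by
    intro i
    have : z i = max 0 (a i) := by rw [hz]
    rw [this]; simp [sub_nonneg, le_max_right]
  have hcomp : ∀ i, z i * (z i - a i) = 0 := by
    intro i
    have hzi : z i = max 0 (a i) := by rw [hz]
    rcases le_total (a i) 0 with h | h
    · rw [hzi, max_eq_left h]; ring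
    · rw [hzi, max_eq_right h]; ring
  have hid' := hid x z
  have h0 : 0 ≤ eval (Sum.elim x z) σ₀ := by
    obtain ⟨k, hpoly, rfl⟩ := hσ₀
    rw [map_sum]
    exact Finset.sum_nonneg fun i _ => by rw [map_pow]; positivity
  have h1 : 0 ≤ dotProduct σ₁ (g x) :=
    Finset.sum_nonneg fun j _ => mul_nonneg (hσ₁ j) (hg x hx j)
  have h2 : dotProduct τ (fun i => z i * (z - W.mulVec z - U.mulVec x - u) i) = 0 := by
    apply Finset.sum_eq_zero
    intro i _
    simp [hsub i, hcomp i]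
  have h3 : 0 ≤ dotProduct σ₂ (z - W.mulVec z - U.mulVec x - u) := by
    apply Finset.sum_nonneg
    intro i _
    exact mul_nonneg (hσ₂ i) (by rw [hsub i]; exact hge i)
  have h4 : 0 ≤ dotProduct σ₃ z :=
    Finset.sum_nonneg fun i _ => mul_nonneg (hσ₃ i) (hznn i)
  have hnn : 0 ≤ l2Norm (Q.mulVec (C.mulVec z + c) + b) := norm_nonneg _
  nlinarith [hid', h0, h1, h2, h3, h4, hnn]
end

section
/- Let W ∈ ℝ^{p×p} and m > 0 be such that xᵀ(I_p − W)x ≥ m‖x‖₂² for all x ∈ ℝ^p (i.e., I_p − W is strongly monotone with parameter m). Then for every s ∈ [0,1]^p, the matrix I_p − diag(s)·W is invertible. -/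
/-- if I − W is strongly monotone with parameter m > 0
(xᵀ(I − W)x ≥ m‖x‖₂² for all x), then for every s ∈ [0,1]^p the matrix I − diag(s)·W is
invertible. (Note that ‖x‖₂² = x ⬝ᵥ x.) -/
theorem strong_monotonicity_invertible (p : ℕ)
    (W : Matrix (Fin p) (Fin p) ℝ) (m : ℝ) (hm : 0 < m)
    (hmono : ∀ x : Fin p → ℝ,
      dotProduct x (((1 : Matrix (Fin p) (Fin p) ℝ) - W).mulVec x) ≥
        m * dotProduct x x) :
    ∀ s : Fin p → ℝ, (∀ i, s i ∈ Set.Icc (0 : ℝ) 1) →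
      IsUnit ((1 : Matrix (Fin p) (Fin p) ℝ) - Matrix.diagonal s * W) := by
  intro s hs
  rw [Matrix.isUnit_iff_isUnit_det, isUnit_iff_ne_zero]
  intro hdet
  obtain ⟨v, hv0, hv⟩ := Matrix.exists_mulVec_eq_zero_iff.2 hdet
  set y := W.mulVec v with hy
  have hvi : ∀ i, v i = s i * y i := by
    intro i
    have h1 := congrFun hv i
    rw [Matrix.sub_mulVec, Matrix.one_mulVec, ← Matrix.mulVec_mulVec] at h1
    have h2 : (Matrix.diagonal s).mulVec y i = s i * y i := by
      rw [Matrix.mulVec_diagonal]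
    simp only [Pi.sub_apply, Pi.zero_apply] at h1
    rw [h2] at h1
    linarith
  have hmain := hmono v
  have hdot : dotProduct v (((1 : Matrix (Fin p) (Fin p) ℝ) - W).mulVec v)
      = ∑ i, s i * (s i - 1) * y i ^ 2 := by
    rw [Matrix.sub_mulVec, Matrix.one_mulVec, dotProduct_sub]
    rw [dotProduct, dotProduct, ← Finset.sum_sub_distrib]
    apply Finset.sum_congr rfl
    intro i _
    rw [hvi i]
    ring
  have hle : ∑ i, s i * (s i - 1) * y i ^ 2 ≤ 0 := by
    apply Finset.sum_nonpos
    intro i _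
    have h0 := (hs i).1
    have h1 := (hs i).2
    have : s i * (s i - 1) ≤ 0 := mul_nonpos_of_nonneg_of_nonpos h0 (by linarith)
    exact mul_nonpos_of_nonpos_of_nonneg this (sq_nonneg _)
  have hpos : 0 < dotProduct v v := by
    rcases lt_or_eq_of_le (Finset.sum_nonneg (fun i _ => mul_self_nonneg (v i))) with h | h
    · exact h
    · exact absurd ((dotProduct_self_eq_zero).1 h.symm) hv0
  rw [hdot] at hmain
  nlinarith
end

section
/- Let W ∈ ℝ^{p×p} and m > 0 be such that xᵀ(I_p − W)x ≥ m‖x‖₂² for all x ∈ ℝ^p. Then for every b ∈ ℝ^p there is at most one z ∈ ℝ^p satisfying z = ReLU(Wz + b): if z₁ = ReLU(Wz₁ + b) and z₂ = ReLU(Wz₂ + b) then z₁ = z₂. -/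
lemma relu_key (a b : ℝ) :
    (max 0 a - max 0 b) * (max 0 a - max 0 b) ≤ (max 0 a - max 0 b) * (a - b) := by
  rcases le_total a 0 with ha | ha <;> rcases le_total b 0 with hb | hb <;>
    simp [max_eq_left, max_eq_right, ha, hb] <;> nlinarith [le_max_left (0:ℝ) a, le_max_left (0:ℝ) b]

/-- if I − W is strongly monotone with parameter m > 0
(xᵀ(I − W)x ≥ m‖x‖₂² for all x, where ‖x‖₂² = x ⬝ᵥ x), then for every b the fixed-point
equation z = ReLU(Wz + b) has at most one solution. -/
theorem mondeq_fixed_point_unique (p : ℕ)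
    (W : Matrix (Fin p) (Fin p) ℝ) (m : ℝ) (hm : 0 < m)
    (hmono : ∀ x : Fin p → ℝ,
      dotProduct x (((1 : Matrix (Fin p) (Fin p) ℝ) - W).mulVec x) ≥
        m * dotProduct x x) :
    ∀ b z₁ z₂ : Fin p → ℝ,
      z₁ = (fun i => max 0 ((W.mulVec z₁ + b) i)) →
      z₂ = (fun i => max 0 ((W.mulVec z₂ + b) i)) →
      z₁ = z₂ := by
  intro b z₁ z₂ h1 h2
  set u := z₁ - z₂ with hu
  have hpt : ∀ i, u i * u i ≤ u i * (W.mulVec u) i := by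
    intro i
    have e1 : z₁ i = max 0 ((W.mulVec z₁ + b) i) := by conv_lhs => rw [h1]
    have e2 : z₂ i = max 0 ((W.mulVec z₂ + b) i) := by conv_lhs => rw [h2]
    have hWu : (W.mulVec u) i = (W.mulVec z₁ + b) i - (W.mulVec z₂ + b) i := by
      simp [hu, Matrix.mulVec_sub, Pi.sub_apply]
    have := relu_key ((W.mulVec z₁ + b) i) ((W.mulVec z₂ + b) i)
    have hui : u i = z₁ i - z₂ i := rfl
    rw [hui, e1, e2, hWu]
    exact this
  have hsum : dotProduct u u ≤ dotProduct u (W.mulVec u) :=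
    Finset.sum_le_sum fun i _ => hpt i
  have hmu := hmono u
  have hexp : dotProduct u (((1 : Matrix (Fin p) (Fin p) ℝ) - W).mulVec u)
      = dotProduct u u - dotProduct u (W.mulVec u) := by
    rw [Matrix.sub_mulVec, dotProduct_sub, Matrix.one_mulVec]
  have hnn : (0:ℝ) ≤ dotProduct u u :=
    Finset.sum_nonneg fun i _ => mul_self_nonneg (u i)
  have hzero : dotProduct u u = 0 := by nlinarith [hmu, hexp, hsum, hnn]
  have hue : u = 0 := by
    funext i
    have := (Finset.sum_eq_zero_iff_of_nonneg (fun i _ => mul_self_nonneg (u i))).mp hzero i (Finset.mem_univ i)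
    exact mul_self_eq_zero.mp this
  have : z₁ - z₂ = 0 := hue
  exact sub_eq_zero.mp this
end
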